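/- arXiv:1104.2309 — 3 statements merged into one kernel-verified Lean document; each statement's English description precedes it below -/
import Mathlib

section
/- Let $(X,\pi,\{p_\alpha\}_{\alpha\in\pi})$ be a pointed proper $\pi$-space, i.e. $X$ is a metric space in which closed balls are compact, $\pi$ acts by isometries $T_\alpha$ cocompactly and properly discontinuously, and $T_\alpha p_\beta = p_{\alpha\beta}$. Let $F^t: X \to X$ ($t \in [0,1]$) be a homotopy with $F^0 = \mathrm{id}_X$ and $F^1(X) \subseteq K$ for a compact set $K$. For a finite subset $P \subset \pi$, a total order $\sigma$ on $P$, parameters $t_\alpha \in [0,1]$, and $x \in X$, define $W_F(\{t_\alpha\},\sigma,x) = (\prod_{\alpha \in P, \text{ ordered by } \sigma} T_\alpha \circ F^{t_\alpha} \circ T_\alpha^{-1})(x)$. Then for every $N < \infty$ there exists $M < \infty$ such that: if $d(p_\alpha, x) < N$ for all $\alpha$ with $t_\alpha \neq 0$, then $d(W_F(\{t_\alpha\},\sigma,x), x) < M$. -/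
open Metric

/-- A pointed proper `π`-space: a metric space `X` in which closed balls are compact,
with a group `π` acting by isometries, cocompactly and properly discontinuously, together
with points `p α` satisfying `T α (p β) = p (α * β)`. -/
structure PointedProperPiSpace (π : Type*) [Group π] (X : Type*) [MetricSpace X] where
  /-- the action of `π` on `X` by isometries -/
  T : π → X ≃ᵢ X
  /-- `T α ∘ T β = T (α * β)` -/
  hmul : ∀ α β : π, ∀ x : X, T α (T β x) = T (α * β) x
  /-- the marked points -/
  p : π → X
  /-- equivariance of the marked points -/
  hp : ∀ α β : π, T α (p β) = p (α * β)
  /-- closed metric balls are compact -/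
  properBalls : ∀ (x : X) (r : ℝ), IsCompact (Metric.closedBall x r)
  /-- the action is cocompact -/
  cocompact : ∃ K : Set X, IsCompact K ∧ ∀ x : X, ∃ α : π, T α x ∈ K
  /-- the action is properly discontinuous -/
  properlyDisc : ∀ K : Set X, IsCompact K → {α : π | ((T α) '' K ∩ K).Nonempty}.Finite

/-- The function `W_F({t_α}, σ, x)`: the composition, in the order given by the list `L`
(which records a finite subset of `π` together with a total order `σ` on it), of the maps
`T α ∘ F^{t α} ∘ T α⁻¹`, applied to `x`.  Since `F^0 = id`, elements with `t α = 0`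
contribute the identity, so this models the function on the direct limit over all finite
ordered subsets of `π`. -/
def Wfunc {π : Type*} [Group π] {X : Type*} [MetricSpace X]
    (S : PointedProperPiSpace π X) (F : ℝ → X → X) (t : π → ℝ) : List π → X → X
  | [], x => x
  | α :: L, x => S.T α (F (t α) ((S.T α).symm (Wfunc S F t L x)))

/-
A continuous homotopy moves the points of a compact set by a bounded amount, so, by
equivariance, the conjugate `T α ∘ F^s ∘ T α⁻¹` moves each point within distance `r` of
`p α` by at most a constant `C r`. Applying the factors of `W_F` one at a time, a point that
starts at `x` drifts by at most `D n` after `n` factors with `t α ≠ 0`, where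
`D (n + 1) = D n + C (N + D n)`. Proper discontinuity makes the set of `α` with
`d(p α, x) < N` uniformly finite, so only boundedly many factors are active and the drift
is bounded.
-/

theorem exists_dist_apply_le_of_isCompact {X : Type*} [PseudoMetricSpace X] {F : ℝ → X → X}
    (hF : Continuous fun q : ℝ × X => F q.1 q.2) {A : Set X} (hA : IsCompact A) :
    ∃ C : ℝ, 0 ≤ C ∧ ∀ s ∈ Set.Icc (0 : ℝ) 1, ∀ z ∈ A, dist (F s z) z ≤ C := by
  obtain ⟨C, hC⟩ := ((isCompact_Icc.prod hA).image (hF.dist continuous_snd)).bddAbove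
  exact ⟨max C 0, le_max_right _ _, fun s hs z hz =>
    (hC ⟨(s, z), ⟨hs, hz⟩, rfl⟩).trans (le_max_left _ _)⟩

namespace PointedProperPiSpace

variable {π : Type*} [Group π] {X : Type*} [MetricSpace X] (S : PointedProperPiSpace π X)

theorem dist_symm_apply_p_one (α : π) (y : X) :
    dist ((S.T α).symm y) (S.p 1) = dist y (S.p α) := by
  rw [← (S.T α).dist_eq, IsometryEquiv.apply_symm_apply, S.hp, mul_one]

theorem dist_p_inv_mul_p_one (β γ : π) :
    dist (S.p (β⁻¹ * γ)) (S.p 1) = dist (S.p γ) (S.p β) := by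
  rw [← S.hp, ← inv_mul_cancel β, ← S.hp, (S.T β⁻¹).dist_eq]

theorem finite_setOf_dist_p_p_one_lt (r : ℝ) :
    {γ : π | dist (S.p γ) (S.p 1) < r}.Finite := by
  refine (S.properlyDisc _ (S.properBalls (S.p 1) r)).subset fun γ hγ => ?_
  have hγ : dist (S.p γ) (S.p 1) < r := hγ
  refine ⟨S.p γ, ⟨S.p 1, mem_closedBall_self (dist_nonneg.trans hγ.le), ?_⟩, hγ.le⟩
  rw [S.hp, mul_one]

theorem exists_card_le_of_forall_dist_p_lt (hcover : ∀ x : X, ∃ α : π, dist (S.p α) x ≤ 1)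
    (N : ℝ) :
    ∃ m : ℕ, ∀ (x : X) (s : Finset π), (∀ α ∈ s, dist (S.p α) x < N) → s.card ≤ m := by
  have hfin := S.finite_setOf_dist_p_p_one_lt (N + 1)
  refine ⟨hfin.toFinset.card, fun x s hs => ?_⟩
  obtain ⟨β, hβ⟩ := hcover x
  refine Finset.card_le_card_of_injOn (β⁻¹ * ·) (fun γ hγ => ?_)
    (mul_right_injective β⁻¹).injOn
  rw [Finset.mem_coe, Set.Finite.mem_toFinset, Set.mem_ofPred_eq, S.dist_p_inv_mul_p_one]
  calc dist (S.p γ) (S.p β) ≤ dist (S.p γ) x + dist x (S.p β) := dist_triangle _ _ _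
    _ < N + 1 := add_lt_add_of_lt_of_le (hs γ hγ) (by rwa [dist_comm])

end PointedProperPiSpace

def driftBound (C : ℝ → ℝ) (N : ℝ) : ℕ → ℝ
  | 0 => 0
  | n + 1 => driftBound C N n + C (N + driftBound C N n)

theorem driftBound_monotone {C : ℝ → ℝ} (hC : ∀ r, 0 ≤ C r) (N : ℝ) :
    Monotone (driftBound C N) :=
  monotone_nat_of_le_succ fun _ => le_add_of_nonneg_right (hC _)

section Wfunc

variable {π : Type*} [Group π] {X : Type*} [MetricSpace X] (S : PointedProperPiSpace π X)
  {F : ℝ → X → X} {t : π → ℝ}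

theorem Wfunc_cons_of_eq_zero (hF0 : ∀ x : X, F 0 x = x) {α : π} (hα : t α = 0)
    (L : List π) (x : X) : Wfunc S F t (α :: L) x = Wfunc S F t L x := by
  simp only [Wfunc, hα, hF0, IsometryEquiv.apply_symm_apply]

/-- Each active factor of `W_F` is applied to a point at distance `< N + D n` from its `p α`,
where it moves points by at most `C (N + D n)`. -/
theorem dist_Wfunc_le_driftBound (hF0 : ∀ x : X, F 0 x = x) {C : ℝ → ℝ}
    (hC : ∀ r, ∀ s ∈ Set.Icc (0 : ℝ) 1, ∀ z ∈ closedBall (S.p 1) r, dist (F s z) z ≤ C r)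
    (ht : ∀ α : π, t α ∈ Set.Icc (0 : ℝ) 1) {N : ℝ} {x : X} :
    ∀ L : List π, (∀ α ∈ L, t α ≠ 0 → dist (S.p α) x < N) →
      dist (Wfunc S F t L x) x ≤ driftBound C N (L.countP (t · ≠ 0))
  | [], _ => by simp [Wfunc, driftBound]
  | α :: L, hx => by
    have ih := dist_Wfunc_le_driftBound hF0 hC ht L
      fun β hβ => hx β (List.mem_cons_of_mem _ hβ)
    by_cases hα : t α = 0
    · rw [Wfunc_cons_of_eq_zero S hF0 hα, List.countP_cons_of_neg (by simpa using hα)]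
      exact ih
    rw [List.countP_cons_of_pos (by simpa using hα), driftBound]
    set y := Wfunc S F t L x
    set z := (S.T α).symm y
    set d := driftBound C N (L.countP (t · ≠ 0))
    have hz : z ∈ closedBall (S.p 1) (N + d) := by
      rw [mem_closedBall, S.dist_symm_apply_p_one, add_comm]
      calc dist y (S.p α) ≤ dist y x + dist x (S.p α) := dist_triangle _ _ _
        _ ≤ _ := add_le_add ih (by rw [dist_comm]; exact (hx α List.mem_cons_self hα).le)
    have hstep : dist (S.T α (F (t α) z)) y ≤ C (N + d) := by
      rw [← (S.T α).apply_symm_apply y, (S.T α).dist_eq]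
      exact hC _ _ (ht α) z hz
    calc dist (S.T α (F (t α) z)) x ≤ dist (S.T α (F (t α) z)) y + dist y x :=
          dist_triangle _ _ _
      _ ≤ d + C (N + d) := by rw [add_comm]; exact add_le_add ih hstep

end Wfunc

theorem Wfunc_bounded_displacement_general
    {π : Type*} [Group π] {X : Type*} [MetricSpace X]
    (S : PointedProperPiSpace π X)
    (hcover : ∀ x : X, ∃ α : π, dist (S.p α) x ≤ 1)
    (F : ℝ → X → X)
    (hFcont : Continuous fun q : ℝ × X => F q.1 q.2)
    (hF0 : ∀ x : X, F 0 x = x) :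
    ∀ N : ℝ, ∃ M : ℝ, ∀ (L : List π), L.Nodup → ∀ (t : π → ℝ),
      (∀ α : π, t α ∈ Set.Icc (0 : ℝ) 1) →
      ∀ x : X, (∀ α ∈ L, t α ≠ 0 → dist (S.p α) x < N) →
      dist (Wfunc S F t L x) x < M := by
  classical
  intro N
  obtain ⟨m, hm⟩ := S.exists_card_le_of_forall_dist_p_lt hcover N
  choose C hC0 hC using fun r =>
    exists_dist_apply_le_of_isCompact hFcont (S.properBalls (S.p 1) r)
  refine ⟨driftBound C N m + 1, fun L hL t ht x hx => ?_⟩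
  have hactive : L.countP (t · ≠ 0) ≤ m := by
    rw [List.countP_eq_length_filter, ← List.toFinset_card_of_nodup (hL.filter _)]
    refine hm x _ fun α hα => ?_
    rw [List.mem_toFinset, List.mem_filter] at hα
    exact hx α hα.1 (of_decide_eq_true hα.2)
  calc dist (Wfunc S F t L x) x ≤ driftBound C N (L.countP (t · ≠ 0)) :=
        dist_Wfunc_le_driftBound S hF0 hC ht L hx
    _ ≤ driftBound C N m := driftBound_monotone hC0 N hactive
    _ < driftBound C N m + 1 := lt_add_one _

/-- for a pointed proper `π`-space (normalized so that the unit balls around the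
`p α` cover `X`), a homotopy `F` from the identity to a map with image in a compact set `K`,
for every `N < ∞` there is `M < ∞` such that whenever `d(p α, x) < N` for all `α` in the
support of `t`, one has `d(W_F({t_α}, σ, x), x) < M`. -/
theorem Wfunc_bounded_displacement
    {π : Type*} [Group π] {X : Type*} [MetricSpace X]
    (S : PointedProperPiSpace π X)
    (hcover : ∀ x : X, ∃ α : π, dist (S.p α) x ≤ 1)
    (F : ℝ → X → X)
    (hFcont : Continuous fun q : ℝ × X => F q.1 q.2)
    (hF0 : ∀ x : X, F 0 x = x)
    (K : Set X) (hK : IsCompact K) (hF1 : ∀ x : X, F 1 x ∈ K) :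
    ∀ N : ℝ, ∃ M : ℝ, ∀ (L : List π), L.Nodup → ∀ (t : π → ℝ),
      (∀ α : π, t α ∈ Set.Icc (0 : ℝ) 1) →
      ∀ x : X, (∀ α ∈ L, t α ≠ 0 → dist (S.p α) x < N) →
      dist (Wfunc S F t L x) x < M :=
  Wfunc_bounded_displacement_general S hcover F hFcont hF0
end

section
/- Let $(X,\pi,\{p_\alpha\})$ be a pointed proper $\pi$-space, $F^t$ a homotopy from $\mathrm{id}_X$ to a map with image in a compact set $K$, and $W_F$ the associated composition operator. For a total order $\sigma$ on $\pi$ and $\gamma \in \pi$, define the order $\sigma^\gamma$ by $\beta_1 \prec_{\sigma^\gamma} \beta_2 \iff \gamma\beta_1 \prec_\sigma \gamma\beta_2$. Then the equivariance identity holds: $W_F(\{t_\alpha\}_{\alpha\in\pi}, \sigma, x) = T_\gamma\, W_F(\{t_{\gamma\alpha}\}_{\alpha\in\pi}, \sigma^\gamma, T_\gamma^{-1} x)$. -/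
open Metric

namespace PointedProperPiSpace

variable {π : Type*} [Group π] {X : Type*} [MetricSpace X] (S : PointedProperPiSpace π X)

theorem T_one_apply (x : X) : S.T 1 x = x :=
  (S.T 1).injective (by rw [S.hmul, one_mul])

theorem T_symm_apply (α : π) (x : X) : (S.T α).symm x = S.T α⁻¹ x :=
  (S.T α).injective (by rw [S.hmul, mul_inv_cancel, T_one_apply, IsometryEquiv.apply_symm_apply])

end PointedProperPiSpace

open PointedProperPiSpace

theorem Wfunc_map_inv_mul_left {π : Type*} [Group π] {X : Type*} [MetricSpace X]
    (S : PointedProperPiSpace π X) (F : ℝ → X → X) (t : π → ℝ) (γ : π) (L : List π) (x : X) :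
    Wfunc S F (fun α => t (γ * α)) (L.map fun α => γ⁻¹ * α) (S.T γ⁻¹ x) =
      S.T γ⁻¹ (Wfunc S F t L x) := by
  induction L with
  | nil => rfl
  | cons α L ih =>
    -- `T γ⁻¹ ∘ (T α ∘ F ∘ T α⁻¹) = (T (γ⁻¹α) ∘ F ∘ T (γ⁻¹α)⁻¹) ∘ T γ⁻¹`
    simp only [List.map_cons, Wfunc, ih, mul_inv_cancel_left, T_symm_apply, S.hmul, mul_inv_rev,
      inv_inv, mul_inv_cancel_right]

/-- The order `σ^γ` on `γ⁻¹ P` is encoded by the list `L.map (γ⁻¹ * ·)`. -/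
theorem Wfunc_equivariance_general
    {π : Type*} [Group π] {X : Type*} [MetricSpace X]
    (S : PointedProperPiSpace π X)
    (F : ℝ → X → X)
    (L : List π) (t : π → ℝ)
    (γ : π) (x : X) :
    Wfunc S F t L x =
      S.T γ (Wfunc S F (fun α => t (γ * α)) (L.map fun α => γ⁻¹ * α) ((S.T γ).symm x)) := by
  rw [T_symm_apply, Wfunc_map_inv_mul_left, S.hmul, mul_inv_cancel, T_one_apply]

/-- the equivariance identity
`W_F({t_α}, σ, x) = T γ (W_F({t_{γα}}, σ^γ, T γ⁻¹ x))`.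
Here the finite ordered set `(P, σ)` is encoded by the list `L`, and the order `σ^γ`
(defined by `β₁ ≺_{σ^γ} β₂ ↔ γβ₁ ≺_σ γβ₂`) on `γ⁻¹ P` is encoded by `L.map (γ⁻¹ * ·)`. -/
theorem Wfunc_equivariance
    {π : Type*} [Group π] {X : Type*} [MetricSpace X]
    (S : PointedProperPiSpace π X)
    (F : ℝ → X → X)
    (hFcont : Continuous fun q : ℝ × X => F q.1 q.2)
    (hF0 : ∀ x : X, F 0 x = x)
    (K : Set X) (hK : IsCompact K) (hF1 : ∀ x : X, F 1 x ∈ K)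
    (L : List π) (hL : L.Nodup) (t : π → ℝ)
    (ht : ∀ α : π, t α ∈ Set.Icc (0 : ℝ) 1)
    (γ : π) (x : X) :
    Wfunc S F t L x =
      S.T γ (Wfunc S F (fun α => t (γ * α)) (L.map fun α => γ⁻¹ * α) ((S.T γ).symm x)) :=
  Wfunc_equivariance_general S F L t γ x
end

section
/- Let $(X,\pi)$ be a proper $\pi$-space (metric space with compact closed balls, cocompact properly discontinuous isometric $\pi$-action) and suppose $X$ is contractible. Then there exists a continuous function $R : X \times X \times [0,1] \to X$ with $R(x,y,0) = x$, $R(x,y,1) = y$, such that for every $N < \infty$ there exists $M < \infty$ with: $d(x,y) < N$ implies $d(x, R(x,y,t)) < M$ for all $t \in [0,1]$. (A 'coarse homotopy' connecting pairs of points with uniformly bounded tracks.) -/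
/-!
Conjugating a contraction `H` of `X` onto `c` by `γ ∈ π` gives a contraction `H_γ` onto `γ⁻¹ c`
that moves the points near `γ⁻¹ L`, for a compact `L ⊇ K` (the translates of the compact set `K`
cover `X`), by a bounded amount. Enumerate `π` and, starting from the path `x → c → y`, blend in
the `H_γ` one after the other with a weight that is `1` on `γ⁻¹ K` and vanishes off `γ⁻¹ L`: at
weight `0` the path is unchanged, at weight `1` it becomes the path from `x` through `γ⁻¹ c` to `y`
along `H_γ`. Proper discontinuity makes the weights locally finite, so the paths are locally
eventually constant and their limit is continuous; it also bounds the number `m` of weights that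
are nonzero at a point. After the last step of weight `1` at `x`, each of the at most `m` later
steps enlarges the track of a pair at distance `< N` by a bounded amount.
-/

/-- A proper `π`-space: a metric space `X` in which closed balls are compact, with a group
`π` acting by isometries, cocompactly and properly discontinuously. -/
structure ProperPiSpace (π : Type*) [Group π] (X : Type*) [MetricSpace X] where
  /-- the action of `π` on `X` by isometries -/
  T : π → X ≃ᵢ X
  /-- `T α ∘ T β = T (α * β)` -/
  hmul : ∀ α β : π, ∀ x : X, T α (T β x) = T (α * β) x
  /-- closed metric balls are compact -/
  properBalls : ∀ (x : X) (r : ℝ), IsCompact (Metric.closedBall x r)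
  /-- the action is cocompact -/
  cocompact : ∃ K : Set X, IsCompact K ∧ ∀ x : X, ∃ α : π, T α x ∈ K
  /-- the action is properly discontinuous -/
  properlyDisc : ∀ K : Set X, IsCompact K → {α : π | ((T α) '' K ∩ K).Nonempty}.Finite

open Set Function Metric Topology Filter

noncomputable section

namespace CoarseHomotopy

variable {X : Type*} [TopologicalSpace X]

structure IsPathFamily (F : X → X → ℝ → X) : Prop where
  continuous : Continuous fun q : X × X × ℝ => F q.1 q.2.1 q.2.2
  eq_left : ∀ x y t, t ≤ 0 → F x y t = x
  eq_right : ∀ x y t, 1 ≤ t → F x y t = y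

structure IsContraction (G : X → ℝ → X) : Prop where
  continuous : Continuous fun p : X × ℝ => G p.1 p.2
  eq_self : ∀ z s, s ≤ 0 → G z s = z
  eq_const : ∀ z z' s, 1 ≤ s → G z s = G z' s

def pathViaCentre (G : X → ℝ → X) (x y : X) (t : ℝ) : X :=
  if t ≤ 1 / 2 then G x (2 * t) else G y (2 - 2 * t)

theorem IsContraction.isPathFamily_pathViaCentre {G : X → ℝ → X} (hG : IsContraction G) :
    IsPathFamily (pathViaCentre G) where
  continuous := by
    refine Continuous.if_le ?_ ?_ continuous_snd.snd continuous_const fun q hq => ?_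
    · exact hG.continuous.comp (continuous_fst.prodMk (continuous_const.mul continuous_snd.snd))
    · exact hG.continuous.comp
        (continuous_snd.fst.prodMk (continuous_const.sub (continuous_const.mul continuous_snd.snd)))
    · rw [hq, show (2 : ℝ) * (1 / 2) = 1 by norm_num, show (2 : ℝ) - 1 = 1 by norm_num]
      exact hG.eq_const _ _ _ le_rfl
  eq_left x y t ht := by
    rw [pathViaCentre, if_pos (by linarith), hG.eq_self _ _ (by linarith)]
  eq_right x y t ht := by
    rw [pathViaCentre, if_neg (by linarith), hG.eq_self _ _ (by linarith)]

def blendStep (G : X → ℝ → X) (w : X → ℝ) (F : X → X → ℝ → X) (x y : X) (t : ℝ) : X :=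
  if t ≤ w x / 3 then G x (3 * t)
  else if t ≤ 1 - w x / 3 then G (F x y ((t - w x / 3) / (1 - 2 * w x / 3))) (w x)
  else G y (3 * (1 - t))

variable {G : X → ℝ → X} {w : X → ℝ} {F : X → X → ℝ → X}

theorem IsPathFamily.blendStep (hF : IsPathFamily F) (hG : IsContraction G) (hw : Continuous w)
    (hw01 : ∀ x, w x ∈ Icc 0 1) : IsPathFamily (blendStep G w F) where
  continuous := by
    have hden : ∀ x, 1 - 2 * w x / 3 ≠ 0 := fun x => by linarith [(hw01 x).2]
    have hwq : Continuous fun q : X × X × ℝ => w q.1 := hw.comp continuous_fst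
    have hτ : Continuous fun q : X × X × ℝ => (q.2.2 - w q.1 / 3) / (1 - 2 * w q.1 / 3) :=
      (continuous_snd.snd.sub (hwq.div_const 3)).div
        (continuous_const.sub ((continuous_const.mul hwq).div_const 3)) fun q => hden q.1
    refine Continuous.if_le ?_ (Continuous.if_le ?_ ?_ continuous_snd.snd ?_ ?_)
      continuous_snd.snd (hwq.div_const 3) ?_
    · exact hG.continuous.comp (continuous_fst.prodMk (continuous_const.mul continuous_snd.snd))
    · exact hG.continuous.comp ((hF.continuous.comp
        (continuous_fst.prodMk (continuous_snd.fst.prodMk hτ))).prodMk hwq)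
    · exact hG.continuous.comp
        (continuous_snd.fst.prodMk (continuous_const.mul (continuous_const.sub continuous_snd.snd)))
    · exact continuous_const.sub (hwq.div_const 3)
    · rintro ⟨x, y, t⟩ (rfl : t = 1 - w x / 3)
      have : (1 - w x / 3 - w x / 3) / (1 - 2 * w x / 3) = 1 :=
        (div_eq_one_iff_eq (hden x)).2 (by ring)
      simp only [this, hF.eq_right x y 1 le_rfl]
      congr 1
      ring
    · rintro ⟨x, y, t⟩ (rfl : t = w x / 3)
      have hle : w x / 3 ≤ 1 - w x / 3 := by linarith [(hw01 x).2]
      simp only [if_pos hle, sub_self, zero_div, hF.eq_left x y 0 le_rfl]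
      congr 1
      ring
  eq_left x y t ht := by
    rw [CoarseHomotopy.blendStep, if_pos (by linarith [(hw01 x).1]), hG.eq_self _ _ (by linarith)]
  eq_right x y t ht := by
    obtain ⟨hw0, hw1⟩ := hw01 x
    rw [CoarseHomotopy.blendStep, if_neg (by linarith)]
    split_ifs with hmid
    · obtain ⟨rfl, hwx⟩ : t = 1 ∧ w x = 0 := by constructor <;> linarith
      simp [hwx, hG.eq_self, hF.eq_right]
    · exact hG.eq_self _ _ (by linarith)

theorem blendStep_of_eq_zero (hF : IsPathFamily F) (hG : IsContraction G) {x : X} (hx : w x = 0)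
    (y : X) (t : ℝ) : blendStep G w F x y t = F x y t := by
  simp only [blendStep, hx, zero_div, sub_zero, mul_zero, div_one]
  split_ifs with h0 h1
  · rw [hG.eq_self _ _ (by linarith), hF.eq_left x y t h0]
  · exact hG.eq_self _ _ le_rfl
  · rw [hG.eq_self _ _ (by linarith), hF.eq_right x y t (by linarith)]

theorem dist_blendStep_le {X : Type*} [PseudoMetricSpace X] {G : X → ℝ → X} {w : X → ℝ}
    {F : X → X → ℝ → X} (hG : IsContraction G) {x y : X} {N B : ℝ} {D : ℝ → ℝ}
    (hD : ∀ r z s, dist x z ≤ r → dist z (G z s) ≤ D r) (hxy : dist x y ≤ N)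
    (hF : w x ≠ 1 → ∀ τ, dist x (F x y τ) ≤ B) (t : ℝ) :
    dist x (blendStep G w F x y t) ≤ max (D 0) (max (N + D N) (B + D B)) := by
  have hx : ∀ s, dist x (G x s) ≤ D 0 := fun s => hD 0 x s (dist_self x).le
  rw [blendStep]
  split_ifs
  · exact le_max_of_le_left (hx _)
  · by_cases hw : w x = 1
    · rw [hw, hG.eq_const _ x 1 le_rfl]
      exact le_max_of_le_left (hx 1)
    · set z := F x y ((t - w x / 3) / (1 - 2 * w x / 3))
      refine le_max_of_le_right (le_max_of_le_right ?_)
      calc dist x (G z (w x)) ≤ dist x z + dist z (G z (w x)) := dist_triangle _ _ _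
        _ ≤ B + D B := add_le_add (hF hw _) (hD B z _ (hF hw _))
  · refine le_max_of_le_right (le_max_of_le_left ?_)
    calc dist x (G y (3 * (1 - t))) ≤ dist x y + dist y (G y (3 * (1 - t))) := dist_triangle _ _ _
      _ ≤ N + D N := add_le_add hxy (hD N y _ hxy)

def blendSeq (G : ℕ → X → ℝ → X) (w : ℕ → X → ℝ) : ℕ → X → X → ℝ → X
  | 0 => pathViaCentre (G 0)
  | k + 1 => blendStep (G k) (w k) (blendSeq G w k)

section blendSeq

variable {G : ℕ → X → ℝ → X} {w : ℕ → X → ℝ}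

theorem isPathFamily_blendSeq (hG : ∀ k, IsContraction (G k)) (hw : ∀ k, Continuous (w k))
    (hw01 : ∀ k x, w k x ∈ Icc 0 1) : ∀ k, IsPathFamily (blendSeq G w k)
  | 0 => (hG 0).isPathFamily_pathViaCentre
  | k + 1 => (isPathFamily_blendSeq hG hw hw01 k).blendStep (hG k) (hw k) (hw01 k)

theorem blendSeq_succ_of_eq_zero (hG : ∀ k, IsContraction (G k)) (hw : ∀ k, Continuous (w k))
    (hw01 : ∀ k x, w k x ∈ Icc 0 1) {k : ℕ} {x : X} (hx : w k x = 0) :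
    blendSeq G w (k + 1) x = blendSeq G w k x :=
  funext₂ fun y t => blendStep_of_eq_zero (isPathFamily_blendSeq hG hw hw01 k) (hG k) hx y t

theorem blendSeq_eq_of_forall_eq_zero (hG : ∀ k, IsContraction (G k))
    (hw : ∀ k, Continuous (w k)) (hw01 : ∀ k x, w k x ∈ Icc 0 1) {x : X} {n k : ℕ} (hnk : n ≤ k)
    (hx : ∀ i, n ≤ i → w i x = 0) : blendSeq G w k x = blendSeq G w n x := by
  induction k, hnk using Nat.le_induction with
  | base => rfl
  | succ k hnk ih => rw [blendSeq_succ_of_eq_zero hG hw hw01 (hx k hnk), ih]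

theorem exists_isPathFamily_eq_blendSeq (hG : ∀ k, IsContraction (G k))
    (hw : ∀ k, Continuous (w k)) (hw01 : ∀ k x, w k x ∈ Icc 0 1)
    (hfin : LocallyFinite fun k => support (w k)) :
    ∃ R : X → X → ℝ → X, IsPathFamily R ∧
      ∀ x n, (∀ k, n ≤ k → w k x = 0) → R x = blendSeq G w n x := by
  have hloc : ∀ x, ∃ U ∈ 𝓝 x, ∃ n, ∀ k, n ≤ k → ∀ z ∈ U, w k z = 0 := by
    intro x
    obtain ⟨U, hU, hUfin⟩ := hfin x
    obtain ⟨n, hn⟩ := eventually_atTop.1 (Nat.cofinite_eq_atTop ▸ hUfin.eventually_cofinite_notMem)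
    exact ⟨U, hU, n, fun k hk z hz => by_contra fun hwz => hn k hk ⟨z, hwz, hz⟩⟩
  choose U hU n hn using hloc
  have hR : ∀ x m, (∀ k, m ≤ k → w k x = 0) →
      blendSeq G w (n x) x = blendSeq G w m x := fun x m hm => by
    rw [← blendSeq_eq_of_forall_eq_zero hG hw hw01 (le_max_left m (n x)) hm,
      blendSeq_eq_of_forall_eq_zero hG hw hw01 (le_max_right m (n x))
        fun k hk => hn x k hk x (mem_of_mem_nhds (hU x))]
  have hpath := isPathFamily_blendSeq hG hw hw01
  refine ⟨fun x => blendSeq G w (n x) x, ⟨?_, ?_, ?_⟩, hR⟩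
  · refine continuous_iff_continuousAt.2 fun q => ?_
    have hev : ∀ᶠ q' : X × X × ℝ in 𝓝 q, q'.1 ∈ U q.1 :=
      (continuous_fst.tendsto q).eventually (hU q.1)
    refine ((hpath (n q.1)).continuous.continuousAt).congr (hev.mono fun q' hq' => ?_)
    exact (congrFun₂ (hR q'.1 (n q.1) fun k hk => hn q.1 k hk q'.1 hq') _ _).symm
  · exact fun x y t ht => (hpath (n x)).eq_left x y t ht
  · exact fun x y t ht => (hpath (n x)).eq_right x y t ht

theorem dist_blendSeq_le_iterate {X : Type*} [PseudoMetricSpace X] {G : ℕ → X → ℝ → X}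
    {w : ℕ → X → ℝ} (hG : ∀ k, IsContraction (G k)) (hw : ∀ k, Continuous (w k))
    (hw01 : ∀ k x, w k x ∈ Icc 0 1) {x y : X} {β : ℝ → ℝ} {r : ℕ} (hr : w r x = 1)
    (hstep : ∀ k B, w k x ≠ 0 → (w k x ≠ 1 → ∀ t, dist x (blendSeq G w k x y t) ≤ B) →
      ∀ t, dist x (blendSeq G w (k + 1) x y t) ≤ β B) :
    ∀ k, r < k → ∀ t, dist x (blendSeq G w k x y t) ≤
      β^[((Finset.Ico r k).filter fun j => w j x ≠ 0).card] 0 := by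
  intro k hrk
  induction k, hrk using Nat.le_induction with
  | base =>
    simp only [Nat.Ico_succ_singleton, Finset.filter_singleton, hr, ne_eq, one_ne_zero,
      not_false_eq_true, if_true, Finset.card_singleton, iterate_one]
    exact hstep r 0 (by simp [hr]) fun h => absurd hr h
  | succ k hrk ih =>
    rw [Nat.Ico_succ_right_eq_insert_Ico (by omega), Finset.filter_insert]
    by_cases hk : w k x = 0
    · rw [if_neg (not_not.2 hk), blendSeq_succ_of_eq_zero hG hw hw01 hk]
      exact ih
    · rw [if_pos hk, Finset.card_insert_of_notMem (by simp), iterate_succ_apply']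
      exact hstep k _ hk fun _ => ih

end blendSeq

section Metric

variable {X : Type*} [PseudoMetricSpace X]

open unitInterval in
def framedContraction (H : C(I × X, X)) (g : X ≃ᵢ X) (z : X) (s : ℝ) : X :=
  g.symm (H (projIcc 0 1 zero_le_one s, g z))

theorem isContraction_framedContraction {c : X}
    (H : (ContinuousMap.id X).Homotopy (ContinuousMap.const X c)) (g : X ≃ᵢ X) :
    IsContraction (framedContraction H.toContinuousMap g) where
  continuous := g.symm.continuous.comp <| H.continuous.comp <|
    (continuous_projIcc.comp continuous_snd).prodMk (g.continuous.comp continuous_fst)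
  eq_self z s hs := by
    simp [framedContraction, projIcc_of_le_left _ hs]
  eq_const z z' s hs := by
    simp [framedContraction, projIcc_of_right_le _ hs]

open unitInterval in
theorem exists_dist_homotopy_le (H : C(I × X, X)) {C : Set X} (hC : IsCompact C) :
    ∃ M, 0 ≤ M ∧ ∀ z ∈ C, ∀ s, dist z (H (s, z)) ≤ M := by
  obtain ⟨M, hM⟩ := (hC.prod (isCompact_univ (X := I))).exists_bound_of_continuousOn
    (f := fun p : X × I => dist p.1 (H (p.2, p.1)))
    (continuous_fst.dist (H.continuous.comp continuous_swap)).continuousOn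
  refine ⟨max M 0, le_max_right _ _, fun z hz s => ?_⟩
  have := hM (z, s) ⟨hz, mem_univ s⟩
  rw [Real.norm_of_nonneg dist_nonneg] at this
  exact this.trans (le_max_left _ _)

open unitInterval in
theorem dist_framedContraction_le {H : C(I × X, X)} {g : X ≃ᵢ X} {L : Set X} {x : X}
    (hx : g x ∈ L) {Λ : ℝ → ℝ} (hΛ : ∀ r, ∀ z ∈ cthickening r L, ∀ s, dist z (H (s, z)) ≤ Λ r)
    {r : ℝ} {z : X} (hz : dist x z ≤ r) (s : ℝ) : dist z (framedContraction H g z s) ≤ Λ r := by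
  rw [framedContraction, ← g.dist_eq, g.apply_symm_apply]
  exact hΛ r _ (mem_cthickening_of_dist_le _ _ r L hx (by rwa [g.dist_eq, dist_comm])) _

structure FramedBumps (X : Type*) [PseudoMetricSpace X] where
  frame : ℕ → X ≃ᵢ X
  bump : ℕ → C(X, ℝ)
  core : Set X
  isCompact_core : IsCompact core
  bump_mem_Icc : ∀ k x, bump k x ∈ Icc 0 1
  frame_mem_core : ∀ k x, bump k x ≠ 0 → frame k x ∈ core
  exists_bump_eq_one : ∀ x, ∃ k, bump k x = 1
  locallyFinite : LocallyFinite fun k => support (bump k)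
  bddMultiplicity : ∃ m, ∀ x, {k | bump k x ≠ 0}.ncard ≤ m

theorem FramedBumps.exists_coarse_pathFamily [ProperSpace X] (B : FramedBumps X) {c : X}
    (H : (ContinuousMap.id X).Homotopy (ContinuousMap.const X c)) :
    ∃ R : X → X → ℝ → X, IsPathFamily R ∧
      ∀ N : ℝ, ∃ M : ℝ, ∀ x y : X, dist x y < N → ∀ t, dist x (R x y t) < M := by
  set G : ℕ → X → ℝ → X := fun k => framedContraction H.toContinuousMap (B.frame k)
  have hG : ∀ k, IsContraction (G k) := fun k => isContraction_framedContraction H _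
  have hw : ∀ k, Continuous (B.bump k) := fun k => (B.bump k).continuous
  obtain ⟨R, hR, hReq⟩ := exists_isPathFamily_eq_blendSeq hG hw B.bump_mem_Icc B.locallyFinite
  refine ⟨R, hR, fun N => ?_⟩
  choose Λ hΛ0 hΛ using fun r => exists_dist_homotopy_le H.toContinuousMap
    (B.isCompact_core.cthickening (r := r))
  obtain ⟨m, hm⟩ := B.bddMultiplicity
  set β : ℝ → ℝ := fun b => max (Λ 0) (max (N + Λ N) (b + Λ b))
  have hβ : id ≤ β := fun b =>
    le_max_of_le_right (le_max_of_le_right (le_add_of_nonneg_right (hΛ0 b)))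
  refine ⟨β^[m] 0 + 1, fun x y hxy t => ?_⟩
  obtain ⟨r, hr⟩ := B.exists_bump_eq_one x
  obtain ⟨n, hn⟩ := eventually_atTop.1
    (Nat.cofinite_eq_atTop ▸ (B.locallyFinite.point_finite x).eventually_cofinite_notMem)
  replace hn : ∀ k, n ≤ k → B.bump k x = 0 := fun k hk => not_not.1 (hn k hk)
  have hrn : r < n := by
    by_contra! hnr
    simp [hn r hnr] at hr
  have hcount : ((Finset.Ico r n).filter fun j => B.bump j x ≠ 0).card ≤ m := by
    refine le_trans ?_ (hm x)
    rw [← Set.ncard_coe_finset]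
    refine Set.ncard_le_ncard (fun k hk => ?_) (B.locallyFinite.point_finite x)
    exact (Finset.mem_filter.1 hk).2
  have hstep : ∀ k b, B.bump k x ≠ 0 →
      (B.bump k x ≠ 1 → ∀ t, dist x (blendSeq G (fun k => B.bump k) k x y t) ≤ b) →
      ∀ t, dist x (blendSeq G (fun k => B.bump k) (k + 1) x y t) ≤ β b :=
    fun k b hk hb => dist_blendStep_le (hG k)
      (fun _ _ _ hz => dist_framedContraction_le (B.frame_mem_core k x hk) hΛ hz _) hxy.le hb
  calc dist x (R x y t) = dist x (blendSeq G (fun k => B.bump k) n x y t) := by rw [hReq x n hn]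
    _ ≤ β^[((Finset.Ico r n).filter fun j => B.bump j x ≠ 0).card] 0 :=
      dist_blendSeq_le_iterate hG hw B.bump_mem_Icc hr hstep n hrn t
    _ ≤ β^[m] 0 := monotone_iterate_of_id_le hβ hcount 0
    _ < β^[m] 0 + 1 := lt_add_one _

end Metric

end CoarseHomotopy

end

namespace ProperPiSpace

open CoarseHomotopy

variable {π : Type*} [Group π] {X : Type*} [MetricSpace X]

theorem properSpace (S : ProperPiSpace π X) : ProperSpace X := ⟨S.properBalls⟩

theorem finite_setOf_exists_mem (S : ProperPiSpace π X) {K C : Set X} (hK : IsCompact K)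
    (hC : IsCompact C) :
    {α | ∃ x ∈ C, S.T α x ∈ K}.Finite :=
  (S.properlyDisc _ (hK.union hC)).subset fun _ ⟨_, hx, hαx⟩ =>
    ⟨_, mem_image_of_mem _ (Or.inr hx), Or.inl hαx⟩

theorem countable [Nonempty X] (S : ProperPiSpace π X) : Countable π := by
  obtain ⟨x₀⟩ := ‹Nonempty X›
  have hcover : ⋃ n : ℕ, {α | ∃ x ∈ ({x₀} : Set X), S.T α x ∈ closedBall x₀ n} = univ :=
    eq_univ_of_forall fun α => mem_iUnion.2
      ⟨⌈dist (S.T α x₀) x₀⌉₊, x₀, rfl, mem_closedBall.2 (Nat.le_ceil _)⟩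
  rw [← countable_univ_iff, ← hcover]
  exact countable_iUnion fun n =>
    (S.finite_setOf_exists_mem (S.properBalls x₀ n) isCompact_singleton).countable

theorem nonempty_framedBumps [Nonempty X] (S : ProperPiSpace π X) :
    Nonempty (FramedBumps X) := by
  have := S.properSpace
  have := S.countable
  obtain ⟨K, hK, hKcov⟩ := S.cocompact
  obtain ⟨b, hbK, -, hbc, hb01⟩ :=
    exists_continuous_one_zero_of_isCompact hK isClosed_empty (disjoint_empty K)
  obtain ⟨e, he⟩ := exists_injective_nat π
  set bump : ℕ → C(X, ℝ) := extend e (fun γ => b.comp ⟨S.T γ, (S.T γ).continuous⟩) 0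
  have hbe : ∀ γ x, bump (e γ) x = b (S.T γ x) := fun γ x => by simp [bump, he.extend_apply]
  have hbn : ∀ k, (¬∃ γ, e γ = k) → bump k = 0 := fun k hk => extend_apply' _ _ _ hk
  have hKL : K ⊆ tsupport b := fun x hx => subset_tsupport _ (by simp [hbK hx])
  have hbump : ∀ k x, bump k x ≠ 0 → ∃ γ, e γ = k ∧ S.T γ x ∈ tsupport b := by
    intro k x hkx
    by_cases hk : ∃ γ, e γ = k
    · obtain ⟨γ, rfl⟩ := hk
      exact ⟨γ, rfl, subset_tsupport _ (show b (S.T γ x) ≠ 0 from hbe γ x ▸ hkx)⟩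
    · simp [hbn k hk] at hkx
  refine ⟨{ frame := extend e S.T fun _ => IsometryEquiv.refl X
            bump := bump
            core := tsupport b
            isCompact_core := hbc
            bump_mem_Icc := fun k x => ?_
            frame_mem_core := fun k x hkx => ?_
            exists_bump_eq_one := fun x => ?_
            locallyFinite := fun x => ?_
            bddMultiplicity := ?_ }⟩
  · by_cases hk : ∃ γ, e γ = k
    · obtain ⟨γ, rfl⟩ := hk
      exact hbe γ x ▸ hb01 _
    · simp [hbn k hk]
  · obtain ⟨γ, rfl, hγ⟩ := hbump k x hkx
    rwa [he.extend_apply]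
  · obtain ⟨γ, hγ⟩ := hKcov x
    exact ⟨e γ, (hbe γ x).trans (hbK hγ)⟩
  · obtain ⟨C, hC, hCx⟩ := exists_compact_mem_nhds x
    refine ⟨C, hCx, ((S.finite_setOf_exists_mem hbc hC).image e).subset ?_⟩
    rintro k ⟨z, hz, hzC⟩
    obtain ⟨γ, rfl, hγ⟩ := hbump k z hz
    exact ⟨γ, ⟨z, hzC, hγ⟩, rfl⟩
  · have hA := S.properlyDisc _ hbc
    refine ⟨{α | (S.T α '' tsupport b ∩ tsupport b).Nonempty}.ncard, fun x => ?_⟩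
    obtain ⟨γ₀, hγ₀⟩ := hKcov x
    refine (ncard_le_ncard (fun k hkx => ?_) (hA.image fun α => e (α * γ₀))).trans
      (ncard_image_le hA)
    obtain ⟨γ, rfl, hγ⟩ := hbump k x hkx
    refine ⟨γ * γ₀⁻¹, ⟨S.T γ x, ⟨S.T γ₀ x, hKL hγ₀, ?_⟩, hγ⟩, by simp⟩
    rw [S.hmul, inv_mul_cancel_right]

end ProperPiSpace

open CoarseHomotopy in
/-- if `(X, π)` is a proper `π`-space and `X` is contractible, then there is a
continuous `R : X × X × [0,1] → X` with `R(x,y,0) = x`, `R(x,y,1) = y`, such that for every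
`N < ∞` there is `M < ∞` with: `d(x,y) < N` implies `d(x, R(x,y,t)) < M` for all `t ∈ [0,1]`. -/
theorem exists_coarse_homotopy
    {π : Type*} [Group π] {X : Type*} [MetricSpace X]
    (S : ProperPiSpace π X) (hX : ContractibleSpace X) :
    ∃ R : X → X → ℝ → X,
      ContinuousOn (fun q : X × X × ℝ => R q.1 q.2.1 q.2.2)
        (Set.univ ×ˢ Set.univ ×ˢ Set.Icc (0 : ℝ) 1) ∧
      (∀ x y : X, R x y 0 = x) ∧
      (∀ x y : X, R x y 1 = y) ∧
      ∀ N : ℝ, ∃ M : ℝ, ∀ x y : X, dist x y < N →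
        ∀ t ∈ Set.Icc (0 : ℝ) 1, dist x (R x y t) < M := by
  have := S.properSpace
  obtain ⟨c, ⟨H⟩⟩ := id_nullhomotopic X
  obtain ⟨B⟩ := S.nonempty_framedBumps
  obtain ⟨R, hR, hbound⟩ := B.exists_coarse_pathFamily H
  refine ⟨R, hR.continuous.continuousOn, fun x y => hR.eq_left x y 0 le_rfl,
    fun x y => hR.eq_right x y 1 le_rfl, fun N => ?_⟩
  obtain ⟨M, hM⟩ := hbound N
  exact ⟨M, fun x y hxy t _ => hM x y hxy t⟩
end
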